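/- Let w(t) = (B/|B|) tanh(t|B|) for some B ≠ 0 (a geodesic of the unit disk through 0), let η₀ ∈ ℂ be constant, and set z(t) = η₀ - w(t)\bar{η₀}. Then (z(t), w(t)) is a geodesic of the Siegel–Jacobi disk: it satisfies μ\bar{η}G₁² = 2kG₃ and μG₁² = -2kG₂, where G₁ = z' + \bar{η}w', G₂ = w'' + 2\bar{w}P^{-1}(w')², G₃ = z'' + 2\bar{w}P^{-1}z'w', P = 1-w\bar{w}, and η = (z+\bar{z}w)/P. In fact along this curve G₁ = 0, G₂ = 0 and G₃ = 0. -/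

import Mathlib

open Complex ComplexConjugate

/-!
Along `z = η₀ - w η̄₀` the quantity `η = (z + z̄ w)/(1 - |w|²)` is identically `η₀`, and
`z' = -w' η̄₀`, `z'' = -w'' η̄₀`; hence `G₁ = 0` and `G₃ = -η̄₀ G₂`. It remains that
`w = c s` with `|c| = 1` solves the disk geodesic equation `G₂ = 0` as soon as the real
function `s` satisfies the Riccati equation `s' = b (1 - s²)`, as `s(t) = tanh (b t)` does.
-/

theorem Real.hasDerivAt_tanh (x : ℝ) : HasDerivAt Real.tanh (1 - Real.tanh x ^ 2) x := by
  have h : HasDerivAt (fun y => Real.sinh y / Real.cosh y)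
      ((Real.cosh x * Real.cosh x - Real.sinh x * Real.sinh x) / Real.cosh x ^ 2) x :=
    (Real.hasDerivAt_sinh x).div (Real.hasDerivAt_cosh x) (Real.cosh_pos x).ne'
  rw [show Real.tanh = fun y => Real.sinh y / Real.cosh y from
    funext Real.tanh_eq_sinh_div_cosh]
  convert h using 1
  field_simp

theorem hasDerivAt_tanh_mul (b x : ℝ) :
    HasDerivAt (fun t => Real.tanh (t * b)) (b * (1 - Real.tanh (x * b) ^ 2)) x := by
  exact ((Real.hasDerivAt_tanh (x * b)).comp x (hasDerivAt_mul_const b)).congr_deriv (mul_comm _ _)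

theorem one_sub_mul_conj_ne_zero {w : ℂ} (hw : ‖w‖ < 1) : 1 - w * conj w ≠ 0 := by
  rw [mul_conj, normSq_eq_norm_sq, ← ofReal_one, ← ofReal_sub, ofReal_ne_zero]
  nlinarith [norm_nonneg w]

/-- The paper's `η`. -/
noncomputable def siegelJacobiEta (z w : ℂ) : ℂ :=
  (z + conj z * w) / (1 - w * conj w)

/-- The paper's `G₂`: the geodesic equation of the Poincaré disk. -/
noncomputable def diskGeodesicDefect (w : ℝ → ℂ) (t : ℝ) : ℂ :=
  deriv (deriv w) t + 2 * conj (w t) / (1 - w t * conj (w t)) * deriv w t ^ 2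

/-- The paper's `G₃`. -/
noncomputable def siegelJacobiZDefect (z w : ℝ → ℂ) (t : ℝ) : ℂ :=
  deriv (deriv z) t + 2 * conj (w t) / (1 - w t * conj (w t)) * deriv z t * deriv w t

theorem siegelJacobiEta_const_sub_mul_conj {w η₀ : ℂ} (hP : 1 - w * conj w ≠ 0) :
    siegelJacobiEta (η₀ - w * conj η₀) w = η₀ := by
  rw [siegelJacobiEta, div_eq_iff hP, map_sub, map_mul, conj_conj]
  ring

theorem diskGeodesicDefect_eq_zero_of_riccati {c : ℂ} (hc : ‖c‖ = 1) {s : ℝ → ℝ} {b : ℝ}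
    (hs : ∀ t, HasDerivAt s (b * (1 - s t ^ 2)) t) (t : ℝ) :
    diskGeodesicDefect (fun t => c * s t) t = 0 := by
  have hw' : deriv (fun t => c * s t) = fun t => c * (b * (1 - s t ^ 2) : ℝ) :=
    funext fun t => ((hs t).ofReal_comp.const_mul c).deriv
  have hw'' : HasDerivAt (deriv fun t => c * s t)
      (c * (b * -(2 * s t * (b * (1 - s t ^ 2))) : ℝ)) t := by
    rw [hw']
    simpa using ((((hs t).pow 2).const_sub 1).const_mul b).ofReal_comp.const_mul c
  have hcc : conj c * c = 1 := by
    rw [mul_comm, mul_conj, normSq_eq_norm_sq, hc]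
    norm_num
  rw [diskGeodesicDefect, hw''.deriv, hw', map_mul, conj_ofReal]
  push_cast
  rw [show c * s t * (conj c * s t) = (s t : ℂ) ^ 2 by linear_combination (s t : ℂ) ^ 2 * hcc]
  by_cases hP : 1 - (s t : ℂ) ^ 2 = 0
  · simp [hP]
  · field_simp
    linear_combination 2 * c * (b : ℂ) ^ 2 * s t * (1 - (s t : ℂ) ^ 2) * hcc

section

variable (w : ℝ → ℂ) (a v : ℂ)

theorem deriv_const_sub_mul_const :
    deriv (fun t => a - w t * v) = fun t => -(deriv w t * v) := by
  simp only [deriv_const_sub', deriv_mul_const_field']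

theorem deriv_deriv_const_sub_mul_const :
    deriv (deriv fun t => a - w t * v) = fun t => -(deriv (deriv w) t * v) := by
  rw [deriv_const_sub_mul_const]
  exact deriv.neg'.trans (by simp only [deriv_mul_const_field'])

theorem siegelJacobiZDefect_const_sub_mul_conj (t : ℝ) :
    siegelJacobiZDefect (fun t => a - w t * conj a) w t = -(conj a * diskGeodesicDefect w t) := by
  rw [siegelJacobiZDefect, diskGeodesicDefect, deriv_deriv_const_sub_mul_const,
    deriv_const_sub_mul_const]
  ring

end

theorem siegelJacobi_geodesic_general (k μ : ℝ)
    (B : ℂ) (hB : B ≠ 0) (η₀ : ℂ) :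
    let w : ℝ → ℂ := fun t => (B / (‖B‖ : ℂ)) * (Real.tanh (t * ‖B‖) : ℂ)
    let z : ℝ → ℂ := fun t => η₀ - w t * starRingEnd ℂ η₀
    let P : ℝ → ℂ := fun t => 1 - w t * starRingEnd ℂ (w t)
    let η : ℝ → ℂ := fun t => (z t + starRingEnd ℂ (z t) * w t) / P t
    let G₁ : ℝ → ℂ := fun t => deriv z t + starRingEnd ℂ (η t) * deriv w t
    let G₂ : ℝ → ℂ := fun t =>
      deriv (deriv w) t + 2 * starRingEnd ℂ (w t) / P t * (deriv w t) ^ 2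
    let G₃ : ℝ → ℂ := fun t =>
      deriv (deriv z) t + 2 * starRingEnd ℂ (w t) / P t * deriv z t * deriv w t
    ∀ t : ℝ,
      G₁ t = 0 ∧ G₂ t = 0 ∧ G₃ t = 0 ∧
      (μ : ℂ) * starRingEnd ℂ (η t) * (G₁ t) ^ 2 = 2 * (k : ℂ) * G₃ t ∧
      (μ : ℂ) * (G₁ t) ^ 2 = -(2 * (k : ℂ)) * G₂ t := by
  intro w z P η G₁ G₂ G₃ t
  have hc : ‖B / (‖B‖ : ℂ)‖ = 1 := by simp [hB]
  have hη : η t = η₀ := by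
    refine siegelJacobiEta_const_sub_mul_conj (one_sub_mul_conj_ne_zero ?_)
    rw [norm_mul, hc, one_mul, norm_real, Real.norm_eq_abs]
    exact Real.abs_tanh_lt_one _
  have hG₁ : G₁ t = 0 := by
    simp only [G₁, hη, z, deriv_const_sub_mul_const]
    ring
  have hG₂ : G₂ t = 0 := diskGeodesicDefect_eq_zero_of_riccati hc (hasDerivAt_tanh_mul _) t
  have hG₃ : G₃ t = -(conj η₀ * G₂ t) := siegelJacobiZDefect_const_sub_mul_conj w η₀ t
  rw [hG₂, mul_zero, neg_zero] at hG₃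
  refine ⟨hG₁, hG₂, hG₃, ?_, ?_⟩ <;> simp [hG₁, hG₂, hG₃]

/-- Let `w(t) = (B/|B|) tanh(t|B|)` (a geodesic of the unit disk through `0`), `η₀ ∈ ℂ`,
and `z(t) = η₀ - w(t) conj η₀`. Then `(z(t), w(t))` is a geodesic of the Siegel–Jacobi
disk: `μ η̄ G₁² = 2k G₃` and `μ G₁² = -2k G₂`; in fact `G₁ = G₂ = G₃ = 0` along the
curve. -/
theorem siegelJacobi_geodesic (k μ : ℝ) (hk : 0 < k) (hμ : 0 < μ)
    (B : ℂ) (hB : B ≠ 0) (η₀ : ℂ) :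
    let w : ℝ → ℂ := fun t => (B / (‖B‖ : ℂ)) * (Real.tanh (t * ‖B‖) : ℂ)
    let z : ℝ → ℂ := fun t => η₀ - w t * starRingEnd ℂ η₀
    let P : ℝ → ℂ := fun t => 1 - w t * starRingEnd ℂ (w t)
    let η : ℝ → ℂ := fun t => (z t + starRingEnd ℂ (z t) * w t) / P t
    let G₁ : ℝ → ℂ := fun t => deriv z t + starRingEnd ℂ (η t) * deriv w t
    let G₂ : ℝ → ℂ := fun t =>
      deriv (deriv w) t + 2 * starRingEnd ℂ (w t) / P t * (deriv w t) ^ 2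
    let G₃ : ℝ → ℂ := fun t =>
      deriv (deriv z) t + 2 * starRingEnd ℂ (w t) / P t * deriv z t * deriv w t
    ∀ t : ℝ,
      G₁ t = 0 ∧ G₂ t = 0 ∧ G₃ t = 0 ∧
      (μ : ℂ) * starRingEnd ℂ (η t) * (G₁ t) ^ 2 = 2 * (k : ℂ) * G₃ t ∧
      (μ : ℂ) * (G₁ t) ^ 2 = -(2 * (k : ℂ)) * G₂ t :=
  siegelJacobi_geodesic_general k μ B hB η₀
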